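/- arXiv:0807.1694 — 5 statements merged into one kernel-verified Lean document; each statement's English description precedes it below -/
import Mathlib

section
/- Let F be a nontrivial finite-dimensional complex inner product space and let α > 0. Let X : ℝ × F → F be a time-dependent vector field, 1-periodic in t, such that for all t ∈ ℝ and all x ∈ F with |x| ≥ α one has both |X(t,x) + π·i·x| ≤ α/4 and Re⟨X(t,x), x⟩ = 0. Then every C¹ map γ : ℝ → F with γ(t+1) = γ(t) for all t and γ'(t) = X(t, γ(t)) for all t satisfies |γ(t)| ≤ α for all t. -/
/-!
Outside the ball of radius `α` the field is tangent to the spheres, so `‖γ‖²` is locally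
constant there; an orbit leaving the ball therefore stays on one sphere of radius `c > α`,
where `X` is `α/4`-close to the rotation `x ↦ -πi x`. In the rotating frame
`u t = exp(πi t) • γ t` the curve moves with speed at most `α/4`, yet periodicity of `γ`
gives `u (t + 1) = -u t`, so `2c ≤ α/4`, which is absurd.
-/

open Real

theorem norm_eq_of_inner_deriv_eq_zero {E : Type*} [NormedAddCommGroup E]
    [InnerProductSpace ℝ E] {γ : ℝ → E} {α : ℝ} (hγ : Differentiable ℝ γ)
    (horth : ∀ t, α < ‖γ t‖ → inner ℝ (γ t) (deriv γ t) = 0) {t₀ : ℝ}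
    (ht₀ : α < ‖γ t₀‖) (t : ℝ) : ‖γ t‖ = ‖γ t₀‖ := by
  have hderiv : ∀ t, HasDerivAt (‖γ ·‖ ^ 2) (2 * inner ℝ (γ t) (deriv γ t)) t :=
    fun t ↦ (hγ t).hasDerivAt.norm_sq
  have hlevel : {t | ‖γ t‖ = ‖γ t₀‖} =
      {t | α < ‖γ t‖} ∩ (‖γ ·‖ ^ 2) ⁻¹' {‖γ t₀‖ ^ 2} := by
    ext t
    simp only [Set.mem_ofPred_eq, Set.mem_inter_iff, Set.mem_preimage, Set.mem_singleton_iff,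
      sq_eq_sq₀ (norm_nonneg _) (norm_nonneg _)]
    exact ⟨fun h ↦ ⟨h ▸ ht₀, h⟩, And.right⟩
  have hopen : IsOpen {t | ‖γ t‖ = ‖γ t₀‖} := hlevel ▸
    (isOpen_lt continuous_const hγ.continuous.norm).isOpen_inter_preimage_of_deriv_eq_zero
      (fun t _ ↦ (hderiv t).differentiableAt.differentiableWithinAt)
      (fun t ht ↦ by simp [(hderiv t).deriv, horth t ht]) _
  have hclosed : IsClosed {t | ‖γ t‖ = ‖γ t₀‖} := isClosed_eq hγ.continuous.norm continuous_const
  exact Set.eq_univ_iff_forall.1 (IsClopen.eq_univ ⟨hclosed, hopen⟩ ⟨t₀, rfl⟩) t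

open Complex in
theorem two_mul_norm_le_of_norm_deriv_add_pi_I_smul_le {F : Type*} [NormedAddCommGroup F]
    [NormedSpace ℂ F] {γ : ℝ → F} {M : ℝ} (hγ : Differentiable ℝ γ)
    (hbound : ∀ t, ‖deriv γ t + ((π : ℂ) * I) • γ t‖ ≤ M) {t₀ : ℝ}
    (hper : γ (t₀ + 1) = γ t₀) : 2 * ‖γ t₀‖ ≤ M := by
  set u : ℝ → F := fun t ↦ cexp (↑(π * t) * I) • γ t
  have hu : ∀ t, HasDerivAt u (cexp (↑(π * t) * I) • (deriv γ t + ((π : ℂ) * I) • γ t)) t := by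
    intro t
    have hexp : HasDerivAt (fun t : ℝ ↦ cexp (↑(π * t) * I))
        (cexp (↑(π * t) * I) * ((π : ℂ) * I)) t := by
      simpa using (((hasDerivAt_id t).const_mul π).ofReal_comp.mul_const I).cexp
    exact (hexp.smul (hγ t).hasDerivAt).congr_deriv (by rw [smul_add, smul_smul])
  have hu_norm : ∀ t, ‖u t‖ = ‖γ t‖ := fun t ↦ by
    simp only [u, norm_smul, norm_exp_ofReal_mul_I, one_mul]
  have hu_antiper : u (t₀ + 1) = -u t₀ := by
    simp only [u, hper, mul_add, ofReal_add, add_mul, Complex.exp_add, mul_one, exp_pi_mul_I,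
      mul_neg_one, neg_smul]
  have hmv := norm_image_sub_le_of_norm_deriv_le_segment' (a := t₀) (b := t₀ + 1)
    (fun t _ ↦ (hu t).hasDerivWithinAt)
    (fun t _ ↦ by rw [norm_smul, norm_exp_ofReal_mul_I, one_mul]; exact hbound t)
    (t₀ + 1) (Set.right_mem_Icc.2 (by linarith))
  calc 2 * ‖γ t₀‖ = ‖u (t₀ + 1) - u t₀‖ := by
        rw [hu_antiper, ← neg_add', norm_neg, ← two_smul ℝ, norm_smul, hu_norm]; simp
    _ ≤ M := by simpa using hmv

theorem stmt2_general
    {F : Type*} [NormedAddCommGroup F] [InnerProductSpace ℂ F]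
    (α : ℝ)
    (X : ℝ → F → F)
    (hX : ∀ (t : ℝ) (x : F), α ≤ ‖x‖ →
      ‖X t x + ((π : ℂ) * Complex.I) • x‖ ≤ α / 4 ∧ (inner ℂ (X t x) x : ℂ).re = 0)
    (γ : ℝ → F) (hγ : ContDiff ℝ 1 γ)
    (hper : ∀ t, γ (t + 1) = γ t)
    (horbit : ∀ t, deriv γ t = X t (γ t)) :
    ∀ t, ‖γ t‖ ≤ α := by
  intro t₀
  by_contra! ht₀
  have hdiff : Differentiable ℝ γ := hγ.differentiable one_ne_zero
  let _ := InnerProductSpace.rclikeToReal ℂ F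
  have hconst : ∀ t, ‖γ t‖ = ‖γ t₀‖ := norm_eq_of_inner_deriv_eq_zero hdiff
    (fun t ht ↦ by rw [real_inner_comm, real_inner_eq_re_inner ℂ, horbit]; exact (hX t _ ht.le).2)
    ht₀
  have hrot : 2 * ‖γ t₀‖ ≤ α / 4 := two_mul_norm_le_of_norm_deriv_add_pi_I_smul_le hdiff
    (fun t ↦ horbit t ▸ (hX t (γ t) (hconst t ▸ ht₀.le)).1) (hper t₀)
  linarith [norm_nonneg (γ t₀)]

/-- Fiberwise model of the assertion in Section 2.2 of the paper: for a 1-periodic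
time-dependent vector field `X` satisfying `‖X(t,x) + πi x‖ ≤ α/4` and
`Re⟪X(t,x), x⟫ = 0` whenever `‖x‖ ≥ α`, every 1-periodic integral curve of `X`
stays in the ball `‖x‖ ≤ α`. -/
theorem stmt2
    {F : Type*} [NormedAddCommGroup F] [InnerProductSpace ℂ F]
    [FiniteDimensional ℂ F] [Nontrivial F]
    (α : ℝ) (hα : 0 < α)
    (X : ℝ → F → F)
    (hXper : ∀ (t : ℝ) (x : F), X (t + 1) x = X t x)
    (hX : ∀ (t : ℝ) (x : F), α ≤ ‖x‖ →
      ‖X t x + ((π : ℂ) * Complex.I) • x‖ ≤ α / 4 ∧ (inner ℂ (X t x) x : ℂ).re = 0)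
    (γ : ℝ → F) (hγ : ContDiff ℝ 1 γ)
    (hper : ∀ t, γ (t + 1) = γ t)
    (horbit : ∀ t, deriv γ t = X t (γ t)) :
    ∀ t, ‖γ t‖ ≤ α :=
  stmt2_general α X hX γ hγ hper horbit
end

section
/- Let N ≥ 1, let V : ℝᴺ → ℝᴺ be a C¹ vector field, let K ⊆ ℝᴺ be compact, let U ⊆ ℝᴺ be an open set containing the zero set {x ∈ ℝᴺ : V(x) = 0}, and let 0 ≤ ρ < 1. Then there is δ₀ > 0 with the following property: if 0 < δ < δ₀ and x : ℝ → ℝᴺ is a C¹ map with x(t+1) = x(t) for all t, with image contained in K, such that (a) x'(t) = δ·V(x(t)) whenever x(t) ∈ U, and (b) ‖x'(t) − δ·V(x(t))‖ ≤ ρ·δ·‖V(x(t))‖ for all t, then x is constant, equal to a point where V vanishes. -/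
/-!
Let `s` maximise `c = ‖V (x t)‖` over the loop and put `v = V (x s)`. The speed is at most
`(1 + ρ) δ c`, so over one period `x` stays within `(1 + ρ) δ c` of `x s`, and `V (x t)` within
`L (1 + ρ) δ c` of `v`, where `L` is a Lipschitz constant of `V` on `K`. Hence
`⟪ẋ, v⟫ ≥ δ c² (1 - ρ - L (1 + ρ) δ)`, which is positive for small `δ` unless `c = 0`; but
`⟪x, v⟫` is periodic, so by Rolle `⟪ẋ, v⟫` vanishes somewhere. Thus `V` vanishes along the loop,
`ẋ = 0`, and `x` is constant.
-/

open Set Function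
open scoped NNReal RealInnerProductSpace

theorem Function.Periodic.exists_forall_le_of_continuous {α : Type*} [LinearOrder α]
    [TopologicalSpace α] [OrderClosedTopology α] {f : ℝ → α} {c : ℝ} (hp : Periodic f c)
    (hc : c ≠ 0) (hf : Continuous f) : ∃ s, ∀ t, f t ≤ f s := by
  obtain ⟨_, ⟨s, rfl⟩, hs⟩ := (hp.compact_of_continuous hc hf).exists_isGreatest (range_nonempty f)
  exact ⟨s, fun t => hs ⟨t, rfl⟩⟩

section InnerProductSpace

variable {E : Type*} [NormedAddCommGroup E] [InnerProductSpace ℝ E]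

theorem Function.Periodic.exists_inner_deriv_eq_zero {x : ℝ → E} {T : ℝ} (hp : Periodic x T)
    (hT : 0 < T) (hx : Differentiable ℝ x) (v : E) (s : ℝ) :
    ∃ t ∈ Ioo s (s + T), ⟪deriv x t, v⟫ = 0 :=
  exists_hasDerivAt_eq_zero (f := fun t => ⟪x t, v⟫) (by linarith)
    (hx.continuous.inner continuous_const).continuousOn (by rw [hp s])
    fun t _ => by simpa using (hx t).hasDerivAt.inner ℝ (hasDerivAt_const t v)

theorem real_inner_ge_of_norm_sub_smul_le {u w v : E} {δ η ε : ℝ} (hδ : 0 ≤ δ)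
    (hu : ‖u - δ • w‖ ≤ η) (hw : ‖w - v‖ ≤ ε) :
    δ * (‖v‖ ^ 2 - ε * ‖v‖) - η * ‖v‖ ≤ ⟪u, v⟫ := by
  have hsplit : ⟪u, v⟫ = ⟪u - δ • w, v⟫ + δ * ⟪w - v, v⟫ + δ * ‖v‖ ^ 2 := by
    simp only [inner_sub_left, real_inner_smul_left, real_inner_self_eq_norm_sq]; ring
  have h₁ := neg_le_of_abs_le (abs_real_inner_le_norm (u - δ • w) v)
  have h₂ := neg_le_of_abs_le (abs_real_inner_le_norm (w - v) v)
  have h₁' : η * ‖v‖ ≥ ‖u - δ • w‖ * ‖v‖ := by gcongr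
  have h₂' : ε * ‖v‖ ≥ ‖w - v‖ * ‖v‖ := by gcongr
  rw [hsplit]
  nlinarith

theorem norm_le_of_norm_sub_smul_le {u w : E} {δ ρ : ℝ} (hδ : 0 ≤ δ)
    (h : ‖u - δ • w‖ ≤ ρ * δ * ‖w‖) : ‖u‖ ≤ (1 + ρ) * δ * ‖w‖ :=
  calc ‖u‖ ≤ ‖u - δ • w‖ + ‖δ • w‖ := norm_le_norm_sub_add u (δ • w)
    _ ≤ ρ * δ * ‖w‖ + δ * ‖w‖ := by rw [norm_smul, Real.norm_of_nonneg hδ]; gcongr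
    _ = (1 + ρ) * δ * ‖w‖ := by ring

theorem Function.Periodic.comp_eq_zero_of_norm_deriv_sub_smul_le {V : E → E} {S : Set E}
    {L : ℝ≥0} (hV : LipschitzOnWith L V S) {ρ δ T : ℝ} (hρ : 0 ≤ ρ) (hδ : 0 < δ) (hT : 0 < T)
    (hsmall : L * (1 + ρ) * δ * T < 1 - ρ) {x : ℝ → E} (hp : Periodic x T)
    (hx : Differentiable ℝ x) (hxS : ∀ t, x t ∈ S)
    (hb : ∀ t, ‖deriv x t - δ • V (x t)‖ ≤ ρ * δ * ‖V (x t)‖) (t : ℝ) : V (x t) = 0 := by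
  have hVx : Continuous fun t => V (x t) := hV.continuousOn.comp_continuous hx.continuous hxS
  obtain ⟨s, hs⟩ := (hp.comp fun y => ‖V y‖).exists_forall_le_of_continuous hT.ne' hVx.norm
  set v := V (x s)
  suffices hv : ‖v‖ = 0 from norm_le_zero_iff.1 (hv ▸ hs t)
  by_contra hv
  have hv : 0 < ‖v‖ := (norm_nonneg v).lt_of_ne' hv
  obtain ⟨t, ht, hzero⟩ := hp.exists_inner_deriv_eq_zero hT hx v s
  have hspeed : ∀ u, ‖deriv x u‖ ≤ (1 + ρ) * δ * ‖v‖ := fun u =>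
    (norm_le_of_norm_sub_smul_le hδ.le (hb u)).trans (by gcongr; exact hs u)
  have hdrift : ‖x t - x s‖ ≤ (1 + ρ) * δ * ‖v‖ * T := by
    refine (convex_univ.norm_image_sub_le_of_norm_deriv_le (fun u _ => hx u)
      (fun u _ => hspeed u) trivial trivial).trans ?_
    rw [Real.norm_of_nonneg (by linarith [ht.1])]
    gcongr
    linarith [ht.2]
  have hclose : ‖V (x t) - v‖ ≤ L * ((1 + ρ) * δ * ‖v‖ * T) := by
    rw [← dist_eq_norm]
    exact (hV.dist_le_mul _ (hxS t) _ (hxS s)).trans (by rw [dist_eq_norm]; gcongr)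
  have hdefect : ‖deriv x t - δ • V (x t)‖ ≤ ρ * δ * ‖v‖ :=
    (hb t).trans (by gcongr; exact hs t)
  have hinner := real_inner_ge_of_norm_sub_smul_le hδ.le hdefect hclose
  rw [hzero] at hinner
  have hpos : 0 < δ * ‖v‖ ^ 2 * (1 - ρ - L * (1 + ρ) * δ * T) :=
    mul_pos (by positivity) (by linarith)
  nlinarith

end InnerProductSpace

theorem stmt5_general (N : ℕ)
    (V : EuclideanSpace ℝ (Fin N) → EuclideanSpace ℝ (Fin N)) (hV : ContDiff ℝ 1 V)
    (K : Set (EuclideanSpace ℝ (Fin N))) (hK : IsCompact K)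
    (U : Set (EuclideanSpace ℝ (Fin N)))
    (ρ : ℝ) (hρ0 : 0 ≤ ρ) (hρ1 : ρ < 1) :
    ∃ δ₀ > (0:ℝ), ∀ δ : ℝ, 0 < δ → δ < δ₀ →
      ∀ x : ℝ → EuclideanSpace ℝ (Fin N), ContDiff ℝ 1 x →
        (∀ t, x (t + 1) = x t) → (∀ t, x t ∈ K) →
        (∀ t, x t ∈ U → deriv x t = δ • V (x t)) →
        (∀ t, ‖deriv x t - δ • V (x t)‖ ≤ ρ * δ * ‖V (x t)‖) →
        ∃ p, V p = 0 ∧ ∀ t, x t = p := by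
  obtain ⟨L, hL⟩ := hV.locallyLipschitz.locallyLipschitzOn.exists_lipschitzOnWith_of_compact hK
  refine ⟨(1 - ρ) / ((1 + ρ) * (L + 1)), div_pos (sub_pos.2 hρ1) (by positivity), ?_⟩
  intro δ hδ hδ₀ x hx hp hxK _ hb
  have hsmall : L * (1 + ρ) * δ * 1 < 1 - ρ := by
    rw [lt_div_iff₀ (by positivity)] at hδ₀
    nlinarith
  have hxd : Differentiable ℝ x := hx.differentiable one_ne_zero
  have hVx := Periodic.comp_eq_zero_of_norm_deriv_sub_smul_le hL hρ0 hδ one_pos hsmall hp hxd hxK hb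
  have hderiv : ∀ t, deriv x t = 0 := fun t => by simpa [hVx t] using hb t
  exact ⟨x 0, hVx 0, fun t => is_const_of_deriv_eq_zero hxd hderiv t 0⟩

/-- Euclidean-space version of Proposition 3.1 of the paper: for a C¹ vector field
`V` on `ℝᴺ`, a compact set `K`, an open neighborhood `U` of the zero set of `V`, and
`0 ≤ ρ < 1`, there is `δ₀ > 0` such that every 1-periodic C¹ loop contained in `K`
which solves `ẋ = δ V(x)` on `U` and satisfies `‖ẋ − δ V(x)‖ ≤ ρ δ ‖V(x)‖` everywhere,
with `0 < δ < δ₀`, is constant at a zero of `V`. -/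
theorem stmt5 (N : ℕ) (hN : 1 ≤ N)
    (V : EuclideanSpace ℝ (Fin N) → EuclideanSpace ℝ (Fin N)) (hV : ContDiff ℝ 1 V)
    (K : Set (EuclideanSpace ℝ (Fin N))) (hK : IsCompact K)
    (U : Set (EuclideanSpace ℝ (Fin N))) (hU : IsOpen U)
    (hUV : {x | V x = 0} ⊆ U)
    (ρ : ℝ) (hρ0 : 0 ≤ ρ) (hρ1 : ρ < 1) :
    ∃ δ₀ > (0:ℝ), ∀ δ : ℝ, 0 < δ → δ < δ₀ →
      ∀ x : ℝ → EuclideanSpace ℝ (Fin N), ContDiff ℝ 1 x →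
        (∀ t, x (t + 1) = x t) → (∀ t, x t ∈ K) →
        (∀ t, x t ∈ U → deriv x t = δ • V (x t)) →
        (∀ t, ‖deriv x t - δ • V (x t)‖ ≤ ρ * δ * ‖V (x t)‖) →
        ∃ p, V p = 0 ∧ ∀ t, x t = p :=
  stmt5_general N V hV K hK U ρ hρ0 hρ1
end

section
/- Let N ≥ 1 and let V : ℝᴺ → ℝᴺ be Lipschitz with Lipschitz constant C > 0. If x : ℝ → ℝᴺ is a differentiable, nonconstant map satisfying x'(t) = V(x(t)) for all t and x(t + T) = x(t) for all t, where T > 0, then T ≥ 2π/C. -/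
/-!
For a shift `h`, the difference `u t = x (t + h) - x t` is `T`-periodic with mean zero over a
period, and `‖u'‖ ≤ C ‖u‖` because `u' t = V (x (t + h)) - V (x t)`. Wirtinger's inequality
(proved coordinatewise from Parseval's identity) gives
`∫ ‖u‖² ≤ (T / 2π)² ∫ ‖u'‖² ≤ (C T / 2π)² ∫ ‖u‖²`, so `C T < 2π` forces `u = 0`.
Then `x h = x 0` for every `h`, and `x` is constant.
-/

open Real MeasureTheory Set Complex

theorem ContinuousOn.memLp_restrict_Ioc {E : Type*} [NormedAddCommGroup E] {f : ℝ → E} {a b : ℝ}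
    (hf : ContinuousOn f (Icc a b)) (p : ENNReal) : MemLp f p (volume.restrict (Ioc a b)) := by
  obtain ⟨M, hM⟩ := isCompact_Icc.exists_bound_of_continuousOn hf
  exact .of_bound ((hf.mono Ioc_subset_Icc_self).aestronglyMeasurable measurableSet_Ioc) M
    (ae_restrict_of_forall_mem measurableSet_Ioc fun t ht => hM t (Ioc_subset_Icc_self ht))

section Wirtinger

variable {a b : ℝ} {g g' : ℝ → ℂ}

theorem fourierCoeffOn_zero_eq_zero_of_integral_eq_zero (hab : a < b)
    (hmean : ∫ t in a..b, g t = 0) :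
    fourierCoeffOn hab g 0 = 0 := by
  simp [fourierCoeffOn_eq_integral, hmean]

/-- Integration by parts: since `g a = g b`, the `n`-th coefficient of `g'` is `2πin / (b - a)`
times that of `g`. -/
theorem norm_fourierCoeffOn_le_of_hasDerivAt (hab : a < b) (hgab : g a = g b)
    (hg : ∀ t ∈ Icc a b, HasDerivAt g (g' t) t) (hg' : IntervalIntegrable g' volume a b)
    {n : ℤ} (hn : n ≠ 0) :
    ‖fourierCoeffOn hab g n‖ ≤ (b - a) / (2 * π) * ‖fourierCoeffOn hab g' n‖ := by
  have hn1 : (1 : ℝ) ≤ |(n : ℝ)| := by exact_mod_cast Int.one_le_abs hn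
  rw [fourierCoeffOn_of_hasDerivAt hab hn (by rwa [uIcc_of_le hab.le]) hg', hgab]
  simp only [one_div, sub_self, mul_zero, zero_sub, mul_neg, norm_neg, norm_mul, norm_inv,
    ← ofReal_sub, norm_real, norm_intCast, Complex.norm_ofNat, norm_I, mul_one,
    Real.norm_of_nonneg pi_pos.le, Real.norm_of_nonneg (sub_nonneg.2 hab.le)]
  calc _ = (b - a) / (2 * π) * ‖fourierCoeffOn hab g' n‖ / |(n : ℝ)| := by ring
    _ ≤ _ := div_le_self (mul_nonneg (div_nonneg (sub_nonneg.2 hab.le) (by positivity))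
      (norm_nonneg _)) hn1

theorem integral_norm_sq_le_of_hasDerivAt (hab : a < b) (hgab : g a = g b)
    (hg : ∀ t ∈ Icc a b, HasDerivAt g (g' t) t) (hg' : ContinuousOn g' (Icc a b))
    (hmean : ∫ t in a..b, g t = 0) :
    ∫ t in a..b, ‖g t‖ ^ 2 ≤ ((b - a) / (2 * π)) ^ 2 * ∫ t in a..b, ‖g' t‖ ^ 2 := by
  have hgc : ContinuousOn g (Icc a b) := fun t ht => (hg t ht).continuousAt.continuousWithinAt
  have hcoeff : ∀ n, ‖fourierCoeffOn hab g n‖ ^ 2 ≤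
      ((b - a) / (2 * π)) ^ 2 * ‖fourierCoeffOn hab g' n‖ ^ 2 := by
    intro n
    rcases eq_or_ne n 0 with rfl | hn
    · rw [fourierCoeffOn_zero_eq_zero_of_integral_eq_zero hab hmean, norm_zero, sq, zero_mul]
      positivity
    · rw [← mul_pow]
      exact pow_le_pow_left₀ (norm_nonneg _) (norm_fourierCoeffOn_le_of_hasDerivAt hab hgab hg
        (hg'.intervalIntegrable_of_Icc hab.le) hn) 2
  have hparseval := hasSum_le hcoeff (hasSum_sq_fourierCoeffOn hab (hgc.memLp_restrict_Ioc 2))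
    ((hasSum_sq_fourierCoeffOn hab (hg'.memLp_restrict_Ioc 2)).mul_left (((b - a) / (2 * π)) ^ 2))
  simp only [smul_eq_mul, mul_left_comm _ (b - a)⁻¹] at hparseval
  exact le_of_mul_le_mul_left hparseval (inv_pos.2 (sub_pos.2 hab))

end Wirtinger

theorem EuclideanSpace.integral_norm_sq_le_of_hasDerivAt {ι : Type*} [Fintype ι] {a b : ℝ}
    {g g' : ℝ → EuclideanSpace ℝ ι} (hab : a < b) (hgab : g a = g b)
    (hg : ∀ t ∈ Icc a b, HasDerivAt g (g' t) t) (hg' : ContinuousOn g' (Icc a b))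
    (hmean : ∫ t in a..b, g t = 0) :
    ∫ t in a..b, ‖g t‖ ^ 2 ≤ ((b - a) / (2 * π)) ^ 2 * ∫ t in a..b, ‖g' t‖ ^ 2 := by
  have hgc : ContinuousOn g (Icc a b) := fun t ht => (hg t ht).continuousAt.continuousWithinAt
  have hsum : ∀ f : ℝ → EuclideanSpace ℝ ι, ContinuousOn f (Icc a b) →
      ∫ t in a..b, ‖f t‖ ^ 2 = ∑ i, ∫ t in a..b, ‖f t i‖ ^ 2 := fun f hf => by
    simp_rw [EuclideanSpace.norm_sq_eq]
    refine intervalIntegral.integral_finsetSum fun i _ => ?_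
    exact (((EuclideanSpace.proj i).continuous.comp_continuousOn hf).norm.pow 2)
      |>.intervalIntegrable_of_Icc hab.le
  rw [hsum g hgc, hsum g' hg', Finset.mul_sum]
  refine Finset.sum_le_sum fun i _ => ?_
  have hmean_i : ∫ t in a..b, ((g t i : ℝ) : ℂ) = 0 := by
    have hcomm := (EuclideanSpace.proj (𝕜 := ℝ) i).intervalIntegral_comp_comm
      (hgc.intervalIntegrable_of_Icc (μ := volume) hab.le)
    rw [EuclideanSpace.coe_proj, hmean] at hcomm
    rw [intervalIntegral.integral_ofReal, hcomm]
    simp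
  simpa only [norm_real] using _root_.integral_norm_sq_le_of_hasDerivAt hab (by rw [hgab])
    (fun t ht => ((EuclideanSpace.proj i).hasFDerivAt.comp_hasDerivAt t (hg t ht)).ofReal_comp)
    (g' := fun t => (g' t i : ℂ)) (by fun_prop) hmean_i

theorem Function.Periodic.intervalIntegral_comp_add_sub_eq_zero {E : Type*} [NormedAddCommGroup E]
    [NormedSpace ℝ E] {f : ℝ → E} {T : ℝ} (hf : Continuous f) (hper : Function.Periodic f T)
    (a h : ℝ) : ∫ t in a..a + T, (f (t + h) - f t) = 0 := by
  have hfh : Continuous fun t => f (t + h) := hf.comp (continuous_add_const h)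
  rw [intervalIntegral.integral_sub (hfh.intervalIntegrable _ _) (hf.intervalIntegrable _ _),
    intervalIntegral.integral_comp_add_right (fun t => f t),
    add_right_comm, hper.intervalIntegral_add_eq (a + h) a, sub_self]

theorem EuclideanSpace.eqOn_zero_of_norm_deriv_le {ι : Type*} [Fintype ι] {a b C : ℝ}
    {u u' : ℝ → EuclideanSpace ℝ ι} (hab : a < b) (hC : 0 ≤ C) (hCab : C * (b - a) < 2 * π)
    (huab : u a = u b) (hu : ∀ t ∈ Icc a b, HasDerivAt u (u' t) t)
    (hu' : ContinuousOn u' (Icc a b)) (hmean : ∫ t in a..b, u t = 0)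
    (hbound : ∀ t ∈ Icc a b, ‖u' t‖ ≤ C * ‖u t‖) :
    EqOn u 0 (Icc a b) := by
  have huc : ContinuousOn u (Icc a b) := fun t ht => (hu t ht).continuousAt.continuousWithinAt
  set I := ∫ t in a..b, ‖u t‖ ^ 2
  have hwirtinger : I ≤ ((b - a) / (2 * π)) ^ 2 * ∫ t in a..b, ‖u' t‖ ^ 2 :=
    integral_norm_sq_le_of_hasDerivAt hab huab hu hu' hmean
  have hlip : ∫ t in a..b, ‖u' t‖ ^ 2 ≤ C ^ 2 * I := by
    rw [← intervalIntegral.integral_const_mul]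
    refine intervalIntegral.integral_mono_on hab.le
      ((hu'.norm.pow 2).intervalIntegrable_of_Icc hab.le)
      ((continuousOn_const.mul (huc.norm.pow 2)).intervalIntegrable_of_Icc hab.le) fun t ht => ?_
    rw [← mul_pow]
    exact pow_le_pow_left₀ (norm_nonneg _) (hbound t ht) 2
  have hcontract : ((b - a) / (2 * π)) ^ 2 * C ^ 2 < 1 := by
    rw [← mul_pow, div_mul_eq_mul_div, mul_comm, pow_lt_one_iff_of_nonneg (by
      have := sub_pos.2 hab; positivity) two_ne_zero, div_lt_one (by positivity)]
    exact hCab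
  have hI : I = 0 := by
    have hI0 : 0 ≤ I := intervalIntegral.integral_nonneg hab.le fun t _ => by positivity
    nlinarith [mul_le_mul_of_nonneg_left hlip (sq_nonneg ((b - a) / (2 * π)))]
  intro t ht
  by_contra hne
  refine (intervalIntegral.integral_lt_integral_of_continuousOn_of_le_of_exists_lt hab
    continuousOn_const (huc.norm.pow 2) (fun _ _ => sq_nonneg _) ⟨t, ht, ?_⟩).ne' ?_
  · exact pow_pos (norm_pos_iff.2 hne) 2
  · simpa using hI

theorem stmt6_general (N : ℕ)
    (V : EuclideanSpace ℝ (Fin N) → EuclideanSpace ℝ (Fin N))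
    (C : ℝ) (hC : 0 < C) (hLip : LipschitzWith (Real.toNNReal C) V)
    (x : ℝ → EuclideanSpace ℝ (Fin N)) (hx : Differentiable ℝ x)
    (hode : ∀ t, deriv x t = V (x t))
    (T : ℝ) (hT : 0 < T) (hper : ∀ t, x (t + T) = x t)
    (hnc : ∃ t₁ t₂, x t₁ ≠ x t₂) :
    2 * π / C ≤ T := by
  by_contra! hshort
  have hCT : C * (T - 0) < 2 * π := by rwa [sub_zero, mul_comm, ← lt_div_iff₀ hC]
  have hxV : ∀ t, HasDerivAt x (V (x t)) t := fun t => hode t ▸ (hx t).hasDerivAt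
  have hperx : Function.Periodic x T := hper
  have hconst : ∀ h, x h = x 0 := by
    intro h
    have hshift := EuclideanSpace.eqOn_zero_of_norm_deriv_le (u := fun t => x (t + h) - x t)
      (u' := fun t => V (x (t + h)) - V (x t)) hT hC.le hCT
      (by simp only [zero_add, add_comm T h, hperx h, hperx.eq])
      (fun t _ => ((hxV (t + h)).comp_add_const t h).sub (hxV t))
      (by have := hLip.continuous; have := hx.continuous; fun_prop)
      (by simpa using hperx.intervalIntegral_comp_add_sub_eq_zero hx.continuous 0 h)
      (fun t _ => by simpa [Real.coe_toNNReal C hC.le] using hLip.norm_sub_le (x (t + h)) (x t))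
      (left_mem_Icc.2 hT.le)
    simpa [sub_eq_zero] using hshift
  obtain ⟨t₁, t₂, hne⟩ := hnc
  exact hne (by rw [hconst t₁, hconst t₂])

/-- The Yorke estimate (Remark 3.2 of the paper): every nonconstant periodic orbit of a
vector field on `ℝᴺ` which is Lipschitz with constant `C > 0` has period at least `2π/C`. -/
theorem stmt6 (N : ℕ) (hN : 1 ≤ N)
    (V : EuclideanSpace ℝ (Fin N) → EuclideanSpace ℝ (Fin N))
    (C : ℝ) (hC : 0 < C) (hLip : LipschitzWith (Real.toNNReal C) V)
    (x : ℝ → EuclideanSpace ℝ (Fin N)) (hx : Differentiable ℝ x)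
    (hode : ∀ t, deriv x t = V (x t))
    (T : ℝ) (hT : 0 < T) (hper : ∀ t, x (t + T) = x t)
    (hnc : ∃ t₁ t₂, x t₁ ≠ x t₂) :
    2 * π / C ≤ T :=
  stmt6_general N V C hC hLip x hx hode T hT hper hnc
end

section
/- Let N ≥ 1, let V : ℝᴺ → ℝᴺ be C¹, let A ⊆ ℝᴺ be compact, let K : ℝᴺ → ℝ be continuous, let ρ ∈ ℝ and T₀ > 0. Assume V(x) ≠ 0 for every x ∈ A with K(x) = ρ. Assume that for every ε > 0 there exist τ ∈ (0, T₀] and a nonconstant C¹ map γ : ℝ → ℝᴺ with γ(t+τ) = γ(t) and γ'(t) = V(γ(t)) for all t, whose image is contained in A and satisfies ρ − ε < K(γ(t)) < ρ + ε for all t. Then there exist τ ∈ (0, T₀] and a nonconstant C¹ map γ : ℝ → ℝᴺ with γ(t+τ) = γ(t) and γ'(t) = V(γ(t)) for all t, whose image is contained in A and satisfies K(γ(t)) = ρ for all t. -/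
/-!
Take orbits `γₙ` in the windows `|K - ρ| < 1/(n+1)` and extract a subsequence along which the
periods `τₙ` and the initial points `γₙ 0` converge, to `τ` and `p`. Since `V` is Lipschitz on the
compact set `A`, Grönwall's inequality `|γₘ t - γₙ t| ≤ |γₘ 0 - γₙ 0| e^{L|t|}` makes the orbits
converge locally uniformly to a curve `γ`, and the velocities `V ∘ γₙ` converge in the same way,
so `γ` is again an orbit of `V`. It lies on `A ∩ {K = ρ}` and is `τ`-periodic. As `V (γ 0) ≠ 0`,
`γ` is not constant, and this also rules out `τ = 0`, since periods tending to `0` squeeze the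
limit to a point.
-/

open Set Filter Topology Function
open scoped NNReal

theorem tendstoLocallyUniformly_of_dist_le_mul {α β ι : Type*} [TopologicalSpace α]
    [PseudoMetricSpace β] {F : ι → α → β} {f : α → β} {l : Filter ι} {a : ι → ℝ} {b : α → ℝ}
    (ha : Tendsto a l (𝓝 0)) (hb : Continuous b) (h : ∀ n x, dist (F n x) (f x) ≤ a n * b x) :
    TendstoLocallyUniformly F f l := by
  refine tendstoLocallyUniformly_iff_filter.2 fun x ↦
    Metric.tendstoUniformlyOnFilter_iff.2 fun ε hε ↦ ?_
  have hab : Tendsto (fun q : ι × α ↦ a q.1 * b q.2) (l ×ˢ 𝓝 x) (𝓝 0) := by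
    simpa using (ha.comp tendsto_fst).mul ((hb.tendsto x).comp tendsto_snd)
  filter_upwards [hab.eventually (gt_mem_nhds hε)] with q hq
  exact dist_comm (F q.1 q.2) _ ▸ (h q.1 q.2).trans_lt hq

section Periodic

variable {β ι : Type*} [UniformSpace β] [T2Space β] {l : Filter ι} [l.NeBot]
  {F : ι → ℝ → β} {f : ℝ → β} {c : ι → ℝ}

theorem TendstoLocallyUniformly.periodic_of_tendsto_period (hF : TendstoLocallyUniformly F f l)
    (hf : Continuous f) (hper : ∀ n, Periodic (F n) (c n)) {c₀ : ℝ} (hc : Tendsto c l (𝓝 c₀)) :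
    Periodic f c₀ := fun t ↦ by
  refine tendsto_nhds_unique ?_ (hF.tendsto_comp hf.continuousAt tendsto_const_nhds)
  simpa only [hper _ t] using hF.tendsto_comp hf.continuousAt ((tendsto_const_nhds (x := t)).add hc)

theorem TendstoLocallyUniformly.apply_eq_of_period_tendsto_zero
    (hF : TendstoLocallyUniformly F f l) (hf : Continuous f) (hper : ∀ n, Periodic (F n) (c n))
    (hc_pos : ∀ n, 0 < c n) (hc : Tendsto c l (𝓝 0)) (t : ℝ) : f t = f 0 := by
  choose y hy hFy using fun n ↦ (hper n).exists_mem_Ico₀ (hc_pos n) t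
  have hy0 : Tendsto y l (𝓝 0) := tendsto_of_tendsto_of_tendsto_of_le_of_le tendsto_const_nhds hc
    (fun n ↦ (hy n).1) (fun n ↦ (hy n).2.le)
  refine tendsto_nhds_unique (hF.tendsto_comp hf.continuousAt tendsto_const_nhds) ?_
  simpa only [hFy] using hF.tendsto_comp hf.continuousAt hy0

end Periodic

theorem tendsto_of_sub_lt_of_lt_add {ι : Type*} {l : Filter ι} {u ε : ι → ℝ} {ρ : ℝ}
    (hε : Tendsto ε l (𝓝 0)) (h : ∀ n, ρ - ε n < u n ∧ u n < ρ + ε n) : Tendsto u l (𝓝 ρ) :=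
  tendsto_of_tendsto_of_tendsto_of_le_of_le (by simpa using tendsto_const_nhds.sub hε)
    (by simpa using tendsto_const_nhds.add hε) (fun n ↦ (h n).1.le) (fun n ↦ (h n).2.le)

theorem exists_ne_of_hasDerivAt_ne_zero {E : Type*} [NormedAddCommGroup E] [NormedSpace ℝ E]
    {γ : ℝ → E} {v : E} {t : ℝ} (hγ : HasDerivAt γ v t) (hv : v ≠ 0) :
    ∃ t₁ t₂, γ t₁ ≠ γ t₂ := by
  by_contra! hconst
  have : γ = fun _ ↦ γ t := funext fun s ↦ hconst s t
  exact hv (hγ.unique (this ▸ hasDerivAt_const t (γ t)))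

section Trajectories

variable {E : Type*} [NormedAddCommGroup E] [NormedSpace ℝ E] {W : E → E} {s : Set E} {L : ℝ≥0}

theorem dist_le_mul_exp_of_trajectories_of_nonneg (hW : LipschitzOnWith L W s) {f g : ℝ → E}
    (hf : ∀ t, HasDerivAt f (W (f t)) t) (hg : ∀ t, HasDerivAt g (W (g t)) t)
    (hfs : ∀ t, f t ∈ s) (hgs : ∀ t, g t ∈ s) {t : ℝ} (ht : 0 ≤ t) :
    dist (f t) (g t) ≤ dist (f 0) (g 0) * Real.exp (L * t) := by
  simpa using dist_le_of_trajectories_ODE_of_mem (v := fun _ ↦ W) (s := fun _ ↦ s)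
    (fun _ _ ↦ hW) (fun u _ ↦ (hf u).continuousAt.continuousWithinAt)
    (fun u _ ↦ (hf u).hasDerivWithinAt) (fun u _ ↦ hfs u)
    (fun u _ ↦ (hg u).continuousAt.continuousWithinAt) (fun u _ ↦ (hg u).hasDerivWithinAt)
    (fun u _ ↦ hgs u) le_rfl t ⟨ht, le_rfl⟩

theorem dist_le_mul_exp_abs_of_trajectories (hW : LipschitzOnWith L W s) {f g : ℝ → E}
    (hf : ∀ t, HasDerivAt f (W (f t)) t) (hg : ∀ t, HasDerivAt g (W (g t)) t)
    (hfs : ∀ t, f t ∈ s) (hgs : ∀ t, g t ∈ s) (t : ℝ) :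
    dist (f t) (g t) ≤ dist (f 0) (g 0) * Real.exp (L * |t|) := by
  rcases le_total 0 t with ht | ht
  · simpa [abs_of_nonneg ht] using dist_le_mul_exp_of_trajectories_of_nonneg hW hf hg hfs hgs ht
  · have hW_neg : LipschitzOnWith L (fun x ↦ -W x) s := fun x hx y hy ↦ by
      simpa [edist_neg_neg] using hW hx hy
    have reverse {h : ℝ → E} (hh : ∀ t, HasDerivAt h (W (h t)) t) (u : ℝ) :
        HasDerivAt (fun u ↦ h (-u)) (-W (h (-u))) u := by
      simpa [Function.comp_def] using (hh (-u)).scomp u (hasDerivAt_neg u)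
    simpa [abs_of_nonpos ht] using dist_le_mul_exp_of_trajectories_of_nonneg hW_neg
      (reverse hf) (reverse hg) (fun u ↦ hfs (-u)) (fun u ↦ hgs (-u)) (neg_nonneg.2 ht)

theorem contDiff_one_of_trajectory (hW : Continuous W) {γ : ℝ → E}
    (hγ : ∀ t, HasDerivAt γ (W (γ t)) t) : ContDiff ℝ 1 γ :=
  have hγ_cont : Continuous γ := continuous_iff_continuousAt.2 fun t ↦ (hγ t).continuousAt
  contDiff_one_iff_deriv.2 ⟨fun t ↦ (hγ t).differentiableAt,
    (hW.comp hγ_cont).congr fun t ↦ (hγ t).deriv.symm⟩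

variable {f : ℕ → ℝ → E}

theorem cauchySeq_trajectories_apply (hW : LipschitzOnWith L W s)
    (hf : ∀ n t, HasDerivAt (f n) (W (f n t)) t) (hfs : ∀ n t, f n t ∈ s)
    (h₀ : CauchySeq fun n ↦ f n 0) (t : ℝ) : CauchySeq fun n ↦ f n t := by
  have hexp : 0 < Real.exp (L * |t|) := Real.exp_pos _
  refine Metric.cauchySeq_iff.2 fun ε hε ↦ ?_
  obtain ⟨N, hN⟩ := Metric.cauchySeq_iff.1 h₀ (ε / Real.exp (L * |t|)) (by positivity)
  refine ⟨N, fun m hm n hn ↦ ?_⟩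
  calc dist (f m t) (f n t) ≤ dist (f m 0) (f n 0) * Real.exp (L * |t|) :=
        dist_le_mul_exp_abs_of_trajectories hW (hf m) (hf n) (hfs m) (hfs n) t
    _ < ε / Real.exp (L * |t|) * Real.exp (L * |t|) := by gcongr; exact hN m hm n hn
    _ = ε := div_mul_cancel₀ ε hexp.ne'

theorem exists_dist_trajectories_le_mul_exp (hW : LipschitzOnWith L W s) (hs : IsComplete s)
    (hf : ∀ n t, HasDerivAt (f n) (W (f n t)) t) (hfs : ∀ n t, f n t ∈ s) {p : E}
    (hp : Tendsto (fun n ↦ f n 0) atTop (𝓝 p)) :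
    ∃ γ : ℝ → E, (∀ t, γ t ∈ s) ∧
      ∀ n t, dist (f n t) (γ t) ≤ dist (f n 0) p * Real.exp (L * |t|) := by
  choose γ hγs hγ using fun t ↦ cauchySeq_tendsto_of_isComplete hs (fun n ↦ hfs n t)
    (cauchySeq_trajectories_apply hW hf hfs hp.cauchySeq t)
  refine ⟨γ, hγs, fun n t ↦ le_of_tendsto_of_tendsto' (tendsto_const_nhds.dist (hγ t))
    ((tendsto_const_nhds.dist hp).mul_const _) fun m ↦ ?_⟩
  exact dist_le_mul_exp_abs_of_trajectories hW (hf n) (hf m) (hfs n) (hfs m) t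

theorem exists_trajectory_tendstoLocallyUniformly (hW : LipschitzOnWith L W s)
    (hs : IsComplete s) (hf : ∀ n t, HasDerivAt (f n) (W (f n t)) t) (hfs : ∀ n t, f n t ∈ s)
    {p : E} (hp : Tendsto (fun n ↦ f n 0) atTop (𝓝 p)) :
    ∃ γ : ℝ → E, TendstoLocallyUniformly f γ atTop ∧ (∀ t, HasDerivAt γ (W (γ t)) t) ∧
      ∀ t, γ t ∈ s := by
  obtain ⟨γ, hγs, hdist⟩ := exists_dist_trajectories_le_mul_exp hW hs hf hfs hp
  have ha : Tendsto (fun n ↦ dist (f n 0) p) atTop (𝓝 0) := tendsto_iff_dist_tendsto_zero.1 hp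
  have hb : Continuous fun t : ℝ ↦ Real.exp (L * |t|) := by fun_prop
  have hγ : TendstoLocallyUniformly f γ atTop := tendstoLocallyUniformly_of_dist_le_mul ha hb hdist
  have hWγ : TendstoLocallyUniformly (fun n t ↦ W (f n t)) (fun t ↦ W (γ t)) atTop := by
    refine tendstoLocallyUniformly_of_dist_le_mul (by simpa using ha.const_mul (L : ℝ)) hb
      fun n t ↦ ?_
    calc dist (W (f n t)) (W (γ t)) ≤ L * dist (f n t) (γ t) :=
          hW.dist_le_mul _ (hfs n t) _ (hγs t)
      _ ≤ L * (dist (f n 0) p * Real.exp (L * |t|)) := by gcongr; exact hdist n t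
      _ = L * dist (f n 0) p * Real.exp (L * |t|) := by ring
  refine ⟨γ, hγ, fun t ↦ ?_, hγs⟩
  exact hasDerivAt_of_tendstoLocallyUniformlyOn isOpen_univ (tendstoLocallyUniformlyOn_univ.2 hWγ)
    (Eventually.of_forall fun n t _ ↦ hf n t)
    (fun t _ ↦ (tendstoLocallyUniformlyOn_univ.2 hγ).tendsto_at (mem_univ t)) (mem_univ t)

end Trajectories

theorem stmt10_general (N : ℕ)
    (V : EuclideanSpace ℝ (Fin N) → EuclideanSpace ℝ (Fin N)) (hV : ContDiff ℝ 1 V)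
    (A : Set (EuclideanSpace ℝ (Fin N))) (hA : IsCompact A)
    (K : EuclideanSpace ℝ (Fin N) → ℝ) (hK : Continuous K)
    (ρ T₀ : ℝ)
    (hnz : ∀ x ∈ A, K x = ρ → V x ≠ 0)
    (horbits : ∀ ε > (0:ℝ), ∃ τ : ℝ, 0 < τ ∧ τ ≤ T₀ ∧
      ∃ γ : ℝ → EuclideanSpace ℝ (Fin N),
        ContDiff ℝ 1 γ ∧ (∃ t₁ t₂, γ t₁ ≠ γ t₂) ∧
        (∀ t, γ (t + τ) = γ t) ∧ (∀ t, deriv γ t = V (γ t)) ∧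
        (∀ t, γ t ∈ A) ∧ (∀ t, ρ - ε < K (γ t) ∧ K (γ t) < ρ + ε)) :
    ∃ τ : ℝ, 0 < τ ∧ τ ≤ T₀ ∧
      ∃ γ : ℝ → EuclideanSpace ℝ (Fin N),
        ContDiff ℝ 1 γ ∧ (∃ t₁ t₂, γ t₁ ≠ γ t₂) ∧
        (∀ t, γ (t + τ) = γ t) ∧ (∀ t, deriv γ t = V (γ t)) ∧
        (∀ t, γ t ∈ A) ∧ (∀ t, K (γ t) = ρ) := by
  choose τ hτ_pos hτ_le f hf_C1 _ hf_per hf_deriv hfA hfK using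
    fun n : ℕ ↦ horbits (1 / (n + 1)) Nat.one_div_pos_of_nat
  have hf (n t) : HasDerivAt (f n) (V (f n t)) t :=
    hf_deriv n t ▸ ((hf_C1 n).differentiable one_ne_zero t).hasDerivAt
  obtain ⟨L, hL⟩ := hV.locallyLipschitz.locallyLipschitzOn.exists_lipschitzOnWith_of_compact hA
  obtain ⟨⟨τ₀, p⟩, ⟨hτ₀, -⟩, φ, hφ, hlim⟩ := (isCompact_Icc.prod hA).tendsto_subseq
    (x := fun n ↦ (τ n, f n 0)) fun n ↦ ⟨⟨(hτ_pos n).le, hτ_le n⟩, hfA n 0⟩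
  obtain ⟨γ, hfγ, hγ, hγA⟩ := exists_trajectory_tendstoLocallyUniformly hL hA.isComplete
    (fun n ↦ hf (φ n)) (fun n ↦ hfA (φ n)) ((continuous_snd.tendsto _).comp hlim)
  have hτ : Tendsto (fun n ↦ τ (φ n)) atTop (𝓝 τ₀) := (continuous_fst.tendsto _).comp hlim
  have hγ_C1 := contDiff_one_of_trajectory hV.continuous hγ
  have hγ_cont := hγ_C1.continuous
  have hε : Tendsto (fun n ↦ 1 / ((φ n : ℝ) + 1)) atTop (𝓝 0) :=
    tendsto_one_div_add_atTop_nhds_zero_nat.comp hφ.tendsto_atTop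
  have hγK (t) : K (γ t) = ρ :=
    tendsto_nhds_unique ((hK.tendsto _).comp (hfγ.tendsto_comp hγ_cont.continuousAt
      tendsto_const_nhds)) (tendsto_of_sub_lt_of_lt_add hε fun n ↦ hfK (φ n) t)
  obtain ⟨t₁, t₂, hγ_ne⟩ := exists_ne_of_hasDerivAt_ne_zero (hγ 0) (hnz _ (hγA 0) (hγK 0))
  have hτ₀_pos : 0 < τ₀ := by
    refine hτ₀.1.lt_of_ne fun h ↦ hγ_ne ?_
    have hconst := hfγ.apply_eq_of_period_tendsto_zero hγ_cont (fun n ↦ hf_per (φ n))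
      (fun n ↦ hτ_pos (φ n)) (h ▸ hτ)
    rw [hconst t₁, hconst t₂]
  exact ⟨τ₀, hτ₀_pos, hτ₀.2, γ, hγ_C1, ⟨t₁, t₂, hγ_ne⟩,
    hfγ.periodic_of_tendsto_period hγ_cont (fun n ↦ hf_per (φ n)) hτ,
    fun t ↦ (hγ t).deriv, hγA, hγK⟩

/-- The Arzelà–Ascoli step in the deduction of Theorem 1.1 from Theorem 1.3 of the
paper: if a C¹ vector field `V` on `ℝᴺ` has, for every `ε > 0`, a nonconstant periodic
orbit of period at most `T₀` contained in the compact set `A` and in the energy window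
`ρ − ε < K < ρ + ε`, and `V` does not vanish on `A ∩ {K = ρ}`, then `V` has a
nonconstant periodic orbit of period at most `T₀` contained in `A` and lying on the
level `K = ρ`. -/
theorem stmt10 (N : ℕ) (hN : 1 ≤ N)
    (V : EuclideanSpace ℝ (Fin N) → EuclideanSpace ℝ (Fin N)) (hV : ContDiff ℝ 1 V)
    (A : Set (EuclideanSpace ℝ (Fin N))) (hA : IsCompact A)
    (K : EuclideanSpace ℝ (Fin N) → ℝ) (hK : Continuous K)
    (ρ T₀ : ℝ) (hT₀ : 0 < T₀)
    (hnz : ∀ x ∈ A, K x = ρ → V x ≠ 0)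
    (horbits : ∀ ε > (0:ℝ), ∃ τ : ℝ, 0 < τ ∧ τ ≤ T₀ ∧
      ∃ γ : ℝ → EuclideanSpace ℝ (Fin N),
        ContDiff ℝ 1 γ ∧ (∃ t₁ t₂, γ t₁ ≠ γ t₂) ∧
        (∀ t, γ (t + τ) = γ t) ∧ (∀ t, deriv γ t = V (γ t)) ∧
        (∀ t, γ t ∈ A) ∧ (∀ t, ρ - ε < K (γ t) ∧ K (γ t) < ρ + ε)) :
    ∃ τ : ℝ, 0 < τ ∧ τ ≤ T₀ ∧
      ∃ γ : ℝ → EuclideanSpace ℝ (Fin N),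
        ContDiff ℝ 1 γ ∧ (∃ t₁ t₂, γ t₁ ≠ γ t₂) ∧
        (∀ t, γ (t + τ) = γ t) ∧ (∀ t, deriv γ t = V (γ t)) ∧
        (∀ t, γ t ∈ A) ∧ (∀ t, K (γ t) = ρ) :=
  stmt10_general N V hV A hA K hK ρ T₀ hnz horbits
end

section
/- Let ρ > 0, let 0 < C₁ ≤ C₂, and let η > 0 with C₂·η < 4π. Let f : [0,∞) → ℝ be C² with f′(s) > 0 for all s, and suppose: f(s) = C₂·η·s for 0 ≤ s ≤ ρ/C₂; f(2ρ/C₂) = 30πρ/C₁; f″(s) > 0 for ρ/C₂ < s < 4ρ/(3C₂); f″(s) < 0 for 5ρ/(3C₂) < s < 2ρ/C₂; f′(s) ∉ 4πℤ for 4ρ/(3C₂) ≤ s ≤ 5ρ/(3C₂); and f′(s) < 4π for all s ≥ 2ρ/C₂. Then there is a unique ℓ_a > 0 with f′(ℓ_a) = 4π and f″(ℓ_a) < 0; it satisfies 5ρ/(3C₂) < ℓ_a < 2ρ/C₂, as well as f(ℓ_a) ≥ 30πρ/C₁ − 4πρ/(3C₂), and −30πρ/C₁ < 4π·ℓ_a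 − f(ℓ_a) < −20πρ/C₁. -/
open Real Set

/-!
On `[ρ/C₂, 2ρ/C₂]` the average slope of `f` is at least `30π - C₂η > 4π`, so `f'` exceeds `4π`
somewhere there. As `f'` increases on the convex piece, never meets `4π` on the middle piece and
decreases on the concave piece, this forces `f'(5ρ/(3C₂)) > 4π`; the intermediate value theorem
then puts the crossing `ℓ_a` in the concave piece, where `f'` is injective, and every other piece
excludes a point with `f' = 4π`, `f'' < 0`. Finally `0 < f' < 4π` on `(ℓ_a, 2ρ/C₂)` traps
`f(2ρ/C₂) - f(ℓ_a)` between `0` and `4π(2ρ/C₂ - ℓ_a)`, which gives the estimates.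
-/

theorem eqOn_deriv_of_eqOn_Icc {f g : ℝ → ℝ} {a b : ℝ} (hab : a < b)
    (hf : ContinuousOn (deriv f) (Icc a b)) (hg : ContinuousOn (deriv g) (Icc a b))
    (h : EqOn f g (Icc a b)) : EqOn (deriv f) (deriv g) (Icc a b) := by
  have hIoo : EqOn (deriv f) (deriv g) (Ioo a b) := fun x hx =>
    (h.eventuallyEq_of_mem (Icc_mem_nhds hx.1 hx.2)).deriv_eq
  exact hIoo.of_subset_closure hf hg Ioo_subset_Icc_self (closure_Ioo hab.ne).ge

theorem IsPreconnected.lt_of_forall_ne {α β : Type*} [TopologicalSpace α] [LinearOrder β]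
    [TopologicalSpace β] [OrderClosedTopology β] {s : Set α} (hs : IsPreconnected s)
    {g : α → β} {c : β} (hg : ContinuousOn g s) (hne : ∀ x ∈ s, g x ≠ c) {x y : α}
    (hx : x ∈ s) (hy : y ∈ s) (hxc : c < g x) : c < g y := by
  by_contra! hyc
  obtain ⟨z, hz, hzc⟩ := hs.intermediate_value hy hx hg ⟨hyc, hxc.le⟩
  exact hne z hz hzc

theorem exists_lt_deriv_of_mul_sub_lt {f : ℝ → ℝ} {a b c : ℝ} (hab : a < b)
    (hf : Differentiable ℝ f) (h : c * (b - a) < f b - f a) :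
    ∃ ξ ∈ Ioo a b, c < deriv f ξ := by
  obtain ⟨ξ, hξ, hslope⟩ :=
    exists_deriv_eq_slope f hab hf.continuous.continuousOn hf.differentiableOn
  exact ⟨ξ, hξ, by rwa [hslope, lt_div_iff₀ (sub_pos.2 hab)]⟩

theorem lt_deriv_of_lt_deriv_of_forall_ne {f : ℝ → ℝ} {p q r t c ξ : ℝ} (hpq : p ≤ q)
    (hqr : q ≤ r) (hrt : r ≤ t) (hg : Continuous (deriv f))
    (hconv : ∀ s ∈ Ioo p q, 0 < deriv (deriv f) s) (hne : ∀ s ∈ Icc q r, deriv f s ≠ c)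
    (hconc : ∀ s ∈ Ioo r t, deriv (deriv f) s < 0) (hξ : ξ ∈ Icc p t)
    (hξc : c < deriv f ξ) : c < deriv f r := by
  have hmono : StrictMonoOn (deriv f) (Icc p q) :=
    strictMonoOn_of_deriv_pos (convex_Icc p q) hg.continuousOn (by rwa [interior_Icc])
  have hanti : StrictAntiOn (deriv f) (Icc r t) :=
    strictAntiOn_of_deriv_neg (convex_Icc r t) hg.continuousOn (by rwa [interior_Icc])
  have hmid : ∀ x ∈ Icc q r, c < deriv f x → c < deriv f r := fun x hx =>
    isPreconnected_Icc.lt_of_forall_ne hg.continuousOn hne hx ⟨hqr, le_rfl⟩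
  rcases lt_or_ge ξ q with hξq | hqξ
  · exact hmid q ⟨le_rfl, hqr⟩ (hξc.trans (hmono ⟨hξ.1, hξq.le⟩ ⟨hpq, le_rfl⟩ hξq))
  rcases le_or_gt ξ r with hξr | hrξ
  · exact hmid ξ ⟨hqξ, hξr⟩ hξc
  · exact hξc.trans (hanti ⟨le_rfl, hrt⟩ ⟨hrξ.le, hξ.2⟩ hrξ)

theorem exists_mem_Ioo_deriv_eq {f : ℝ → ℝ} {p q r t c : ℝ} (hpq : p ≤ q) (hqr : q ≤ r)
    (hrt : r < t) (hf : Differentiable ℝ f) (hg : Continuous (deriv f))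
    (hconv : ∀ s ∈ Ioo p q, 0 < deriv (deriv f) s) (hne : ∀ s ∈ Icc q r, deriv f s ≠ c)
    (hconc : ∀ s ∈ Ioo r t, deriv (deriv f) s < 0) (hslope : c * (t - p) < f t - f p)
    (ht : deriv f t < c) : ∃ ℓ ∈ Ioo r t, deriv f ℓ = c := by
  obtain ⟨ξ, hξ, hξc⟩ := exists_lt_deriv_of_mul_sub_lt (by linarith) hf hslope
  have hr : c < deriv f r := lt_deriv_of_lt_deriv_of_forall_ne hpq hqr hrt.le hg hconv hne
    hconc (Ioo_subset_Icc_self hξ) hξc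
  exact intermediate_value_Ioo' hrt.le hg.continuousOn ⟨ht, hr⟩

theorem image_sub_mem_Ioo_of_deriv_mem_Ioo {f : ℝ → ℝ} {a b c : ℝ} (hab : a < b)
    (hf : Differentiable ℝ f) (hderiv : ∀ x ∈ Ioo a b, deriv f x ∈ Ioo 0 c) :
    f b - f a ∈ Ioo 0 (c * (b - a)) := by
  have hD : Convex ℝ (Icc a b) := convex_Icc a b
  have hmem : a ∈ Icc a b ∧ b ∈ Icc a b := ⟨left_mem_Icc.2 hab.le, right_mem_Icc.2 hab.le⟩
  constructor
  · simpa using hD.mul_sub_lt_image_sub_of_lt_deriv hf.continuous.continuousOn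
      hf.differentiableOn (C := 0) (by rw [interior_Icc]; exact fun x hx => (hderiv x hx).1)
      a hmem.1 b hmem.2 hab
  · exact hD.image_sub_lt_mul_sub_of_deriv_lt hf.continuous.continuousOn hf.differentiableOn
      (by rw [interior_Icc]; exact fun x hx => (hderiv x hx).2) a hmem.1 b hmem.2 hab

theorem mem_Ioo_of_deriv_eq_of_deriv_deriv_neg {f : ℝ → ℝ} {p q r t c ℓ : ℝ}
    (hinit : ∀ s ∈ Ioc 0 p, deriv f s ≠ c) (hconv : ∀ s ∈ Ioo p q, 0 < deriv (deriv f) s)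
    (hne : ∀ s ∈ Icc q r, deriv f s ≠ c) (hlt : ∀ s, t ≤ s → deriv f s ≠ c) (hℓ : 0 < ℓ)
    (hgℓ : deriv f ℓ = c) (hg'ℓ : deriv (deriv f) ℓ < 0) : ℓ ∈ Ioo r t := by
  refine ⟨?_, ?_⟩
  · by_contra! hℓr
    rcases le_or_gt ℓ p with hℓp | hpℓ
    · exact hinit ℓ ⟨hℓ, hℓp⟩ hgℓ
    rcases lt_or_ge ℓ q with hℓq | hqℓ
    · exact (hconv ℓ ⟨hpℓ, hℓq⟩).not_gt hg'ℓ
    · exact hne ℓ ⟨hqℓ, hℓr⟩ hgℓ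
  · by_contra! htℓ
    exact hlt ℓ htℓ hgℓ

theorem exists_deriv_eq_of_profile {f : ℝ → ℝ} {p q r t c : ℝ} (hp : 0 ≤ p) (hpq : p ≤ q)
    (hqr : q ≤ r) (hrt : r < t) (hf : Differentiable ℝ f) (hg : Continuous (deriv f))
    (hpos : ∀ s, 0 ≤ s → 0 < deriv f s) (hinit : ∀ s ∈ Ioc 0 p, deriv f s ≠ c)
    (hconv : ∀ s ∈ Ioo p q, 0 < deriv (deriv f) s) (hne : ∀ s ∈ Icc q r, deriv f s ≠ c)
    (hconc : ∀ s ∈ Ioo r t, deriv (deriv f) s < 0) (hlt : ∀ s, t ≤ s → deriv f s < c)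
    (hslope : c * (t - p) < f t - f p) :
    ∃ ℓ ∈ Ioo r t, deriv f ℓ = c ∧
      (∀ ℓ', 0 < ℓ' → deriv f ℓ' = c → deriv (deriv f) ℓ' < 0 → ℓ' = ℓ) ∧
      f t - f ℓ ∈ Ioo 0 (c * (t - ℓ)) := by
  obtain ⟨ℓ, hℓ, hgℓ⟩ :=
    exists_mem_Ioo_deriv_eq hpq hqr hrt hf hg hconv hne hconc hslope (hlt t le_rfl)
  have hanti : StrictAntiOn (deriv f) (Icc r t) :=
    strictAntiOn_of_deriv_neg (convex_Icc r t) hg.continuousOn (by rwa [interior_Icc])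
  refine ⟨ℓ, hℓ, hgℓ, fun ℓ' hℓ'0 hgℓ' hg'ℓ' => ?_, ?_⟩
  · have hℓ' := mem_Ioo_of_deriv_eq_of_deriv_deriv_neg hinit hconv hne
      (fun s hs => (hlt s hs).ne) hℓ'0 hgℓ' hg'ℓ'
    exact hanti.injOn (Ioo_subset_Icc_self hℓ') (Ioo_subset_Icc_self hℓ) (hgℓ'.trans hgℓ.symm)
  · exact image_sub_mem_Ioo_of_deriv_mem_Ioo hℓ.2 hf fun x hx =>
      ⟨hpos x (by linarith [hℓ.1, hx.1]),
        hgℓ ▸ hanti (Ioo_subset_Icc_self hℓ) ⟨(hℓ.1.trans hx.1).le, hx.2.le⟩ hx.1⟩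

theorem stmt11_general (ρ C₁ C₂ η : ℝ) (hρ : 0 < ρ) (hC₁ : 0 < C₁) (hC₁₂ : C₁ ≤ C₂)
    (hη4 : C₂ * η < 4 * π)
    (f : ℝ → ℝ) (hf : ContDiff ℝ 2 f)
    (hf' : ∀ s : ℝ, 0 ≤ s → 0 < deriv f s)
    (hlin : ∀ s ∈ Set.Icc (0:ℝ) (ρ / C₂), f s = C₂ * η * s)
    (hval : f (2 * ρ / C₂) = 30 * π * ρ / C₁)
    (hconv : ∀ s ∈ Set.Ioo (ρ / C₂) (4 * ρ / (3 * C₂)), 0 < deriv (deriv f) s)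
    (hconc : ∀ s ∈ Set.Ioo (5 * ρ / (3 * C₂)) (2 * ρ / C₂), deriv (deriv f) s < 0)
    (hnores : ∀ s ∈ Set.Icc (4 * ρ / (3 * C₂)) (5 * ρ / (3 * C₂)),
      ¬ ∃ k : ℤ, deriv f s = 4 * π * k)
    (hlt : ∀ s : ℝ, 2 * ρ / C₂ ≤ s → deriv f s < 4 * π) :
    ∃ ℓa : ℝ, (0 < ℓa ∧ deriv f ℓa = 4 * π ∧ deriv (deriv f) ℓa < 0) ∧
      (∀ ℓ : ℝ, 0 < ℓ → deriv f ℓ = 4 * π → deriv (deriv f) ℓ < 0 → ℓ = ℓa) ∧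
      5 * ρ / (3 * C₂) < ℓa ∧ ℓa < 2 * ρ / C₂ ∧
      30 * π * ρ / C₁ - 4 * π * ρ / (3 * C₂) ≤ f ℓa ∧
      -(30 * π * ρ / C₁) < 4 * π * ℓa - f ℓa ∧
      4 * π * ℓa - f ℓa < -(20 * π * ρ / C₁) := by
  have hC₂ : 0 < C₂ := hC₁.trans_le hC₁₂
  have hp : 0 < ρ / C₂ := by positivity
  have hpa : ρ / C₂ ≤ ρ / C₁ := div_le_div_of_nonneg_left hρ.le hC₁ hC₁₂
  have hq : 4 * ρ / (3 * C₂) = 4 / 3 * (ρ / C₂) := by ring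
  have hr : 5 * ρ / (3 * C₂) = 5 / 3 * (ρ / C₂) := by ring
  have ht : 2 * ρ / C₂ = 2 * (ρ / C₂) := by ring
  have ha : 30 * π * ρ / C₁ = 30 * π * (ρ / C₁) := by ring
  have hg : Continuous (deriv f) := hf.continuous_deriv one_le_two
  have hlin' : ∀ s ∈ Icc 0 (ρ / C₂), deriv f s = C₂ * η := fun s hs => by
    simpa using eqOn_deriv_of_eqOn_Icc hp hg.continuousOn (by simp [continuousOn_const]) hlin hs
  have hslope : 4 * π * (2 * ρ / C₂ - ρ / C₂) < f (2 * ρ / C₂) - f (ρ / C₂) := by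
    rw [hval, hlin _ ⟨hp.le, le_rfl⟩, ht, ha]
    linarith [mul_lt_mul_of_pos_right hη4 hp, mul_pos pi_pos hp,
      mul_le_mul_of_nonneg_left hpa (by positivity : (0:ℝ) ≤ 30 * π)]
  obtain ⟨ℓ, hℓ, hgℓ, huniq, hft, hgap⟩ := exists_deriv_eq_of_profile hp.le (by linarith)
    (by linarith) (by linarith) (hf.differentiable two_ne_zero) hg hf'
    (fun s hs => ((hlin' s (Ioc_subset_Icc_self hs)).trans_lt hη4).ne) hconv
    (fun s hs h => hnores s hs ⟨1, by rw [h]; push_cast; ring⟩) hconc hlt hslope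
  have hℓ0 : 0 < ℓ := by linarith [hℓ.1]
  refine ⟨ℓ, ⟨hℓ0, hgℓ, hconc ℓ hℓ⟩, huniq, hℓ.1, hℓ.2, ?_, ?_, ?_⟩
  · have : 4 * π * (2 * ρ / C₂ - 5 * ρ / (3 * C₂)) = 4 * π * ρ / (3 * C₂) := by ring
    linarith [mul_lt_mul_of_pos_left hℓ.1 (by positivity : (0:ℝ) < 4 * π)]
  · have : 0 < 4 * π * ℓ := by positivity
    linarith
  · have : 20 * π * ρ / C₁ = 20 * π * (ρ / C₁) := by ring
    rw [ht] at hgap hval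
    have : 0 < π * (ρ / C₁) := by positivity
    linarith [mul_le_mul_of_nonneg_left hpa (by positivity : (0:ℝ) ≤ 8 * π)]

/-- Properties of the profile function `f_a` from Section 4 of the paper: under the
listed hypotheses there is a unique `ℓ_a > 0` with `f′(ℓ_a) = 4π` and `f″(ℓ_a) < 0`; it
satisfies `5ρ/(3C₂) < ℓ_a < 2ρ/C₂`, `f(ℓ_a) ≥ 30πρ/C₁ − 4πρ/(3C₂)`, and
`−30πρ/C₁ < 4πℓ_a − f(ℓ_a) < −20πρ/C₁`. -/
theorem stmt11 (ρ C₁ C₂ η : ℝ) (hρ : 0 < ρ) (hC₁ : 0 < C₁) (hC₁₂ : C₁ ≤ C₂)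
    (hη : 0 < η) (hη4 : C₂ * η < 4 * π)
    (f : ℝ → ℝ) (hf : ContDiff ℝ 2 f)
    (hf' : ∀ s : ℝ, 0 ≤ s → 0 < deriv f s)
    (hlin : ∀ s ∈ Set.Icc (0:ℝ) (ρ / C₂), f s = C₂ * η * s)
    (hval : f (2 * ρ / C₂) = 30 * π * ρ / C₁)
    (hconv : ∀ s ∈ Set.Ioo (ρ / C₂) (4 * ρ / (3 * C₂)), 0 < deriv (deriv f) s)
    (hconc : ∀ s ∈ Set.Ioo (5 * ρ / (3 * C₂)) (2 * ρ / C₂), deriv (deriv f) s < 0)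
    (hnores : ∀ s ∈ Set.Icc (4 * ρ / (3 * C₂)) (5 * ρ / (3 * C₂)),
      ¬ ∃ k : ℤ, deriv f s = 4 * π * k)
    (hlt : ∀ s : ℝ, 2 * ρ / C₂ ≤ s → deriv f s < 4 * π) :
    ∃ ℓa : ℝ, (0 < ℓa ∧ deriv f ℓa = 4 * π ∧ deriv (deriv f) ℓa < 0) ∧
      (∀ ℓ : ℝ, 0 < ℓ → deriv f ℓ = 4 * π → deriv (deriv f) ℓ < 0 → ℓ = ℓa) ∧
      5 * ρ / (3 * C₂) < ℓa ∧ ℓa < 2 * ρ / C₂ ∧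
      30 * π * ρ / C₁ - 4 * π * ρ / (3 * C₂) ≤ f ℓa ∧
      -(30 * π * ρ / C₁) < 4 * π * ℓa - f ℓa ∧
      4 * π * ℓa - f ℓa < -(20 * π * ρ / C₁) :=
  stmt11_general ρ C₁ C₂ η hρ hC₁ hC₁₂ hη4 f hf hf' hlin hval hconv hconc hnores hlt
end
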